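/- Let G be the graph obtained from K7 by deleting two nonadjacent edges and then performing a Δ-Y exchange on a triangle having exactly one vertex incident to a deleted edge. Then G contains K_{4,4} minus an edge as a minor. -/

import Mathlib

open SimpleGraph

/-- `H` is a minor of `G`: branch-set formulation. -/
def IsMinor {W V : Type*} (H : SimpleGraph W) (G : SimpleGraph V) : Prop :=
  ∃ ρ : W → Set V,
    (∀ w, (ρ w).Nonempty) ∧
    (∀ w, (G.induce (ρ w)).Connected) ∧
    (Pairwise fun w w' => Disjoint (ρ w) (ρ w')) ∧
    ∀ ⦃w w'⦄, H.Adj w w' → ∃ a ∈ ρ w, ∃ b ∈ ρ w', G.Adj a b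

/-- Δ-Y exchange on the triangle `v₁ v₂ v₃`. -/
def deltaY {V : Type*} (G : SimpleGraph V) (v₁ v₂ v₃ : V) : SimpleGraph (V ⊕ Unit) where
  Adj x y :=
    match x, y with
    | .inl a, .inl b => G.Adj a b ∧ s(a, b) ∉ ({s(v₁, v₂), s(v₂, v₃), s(v₁, v₃)} : Set (Sym2 V))
    | .inl a, .inr _ => a = v₁ ∨ a = v₂ ∨ a = v₃
    | .inr _, .inl a => a = v₁ ∨ a = v₂ ∨ a = v₃
    | .inr _, .inr _ => False
  symm := ⟨by
    rintro (a | a) (b | b) h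
    · exact ⟨h.1.symm, by rw [show s(b, a) = s(a, b) from Sym2.eq_swap]; exact h.2⟩
    · exact h
    · exact h
    · exact h⟩
  loopless := ⟨by
    rintro (a | a) h
    · exact G.loopless.irrefl a h.1
    · exact h⟩

/-- `K_{4,4}` minus an edge (the edge between `inl 0` and `inr 0`). -/
def K44e : SimpleGraph (Fin 4 ⊕ Fin 4) where
  Adj x y :=
    match x, y with
    | .inl i, .inr j => ¬(i = 0 ∧ j = 0)
    | .inr j, .inl i => ¬(i = 0 ∧ j = 0)
    | _, _ => False
  symm := ⟨by rintro (i | i) (j | j) h <;> exact h⟩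
  loopless := ⟨by rintro (i | i) h <;> exact h⟩

/-- Vertices `0,…,6` stand for `v₁,…,v₇`.  `G` is `K₇` minus the nonadjacent edges
`v₁v₂`, `v₃v₄`; `G'` is obtained by the Δ-Y exchange on the triangle `{v₄, v₆, v₇}`
(which has exactly one vertex, `v₄`, incident to a deleted edge), with `Sum.inr ()`
being the new vertex `v₈`. -/
def G₄ : SimpleGraph (Fin 7) := (⊤ : SimpleGraph (Fin 7)).deleteEdges {s(0, 1), s(2, 3)}

def G₄' : SimpleGraph (Fin 7 ⊕ Unit) := deltaY G₄ 3 5 6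

/-- Branch sets witnessing the `K_{4,4}-e` minor, with bipartition
`{v₁, v₂, v₅, v₈}` and `{v₃, v₄, v₆, v₇}` (the missing edge of `K44e` corresponding to
the nonadjacent pair `v₈, v₃`). -/
def ρ₄ : Fin 4 ⊕ Fin 4 → Set (Fin 7 ⊕ Unit) :=
  Sum.elim
    ![{Sum.inr ()}, {Sum.inl 0}, {Sum.inl 1}, {Sum.inl 4}]
    ![{Sum.inl 2}, {Sum.inl 3}, {Sum.inl 5}, {Sum.inl 6}]

/-! All branch sets are singletons, so it suffices to find `K_{4,4} - e` as a subgraph of `G₄'`.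
The new vertex `v₈` is adjacent to `v₄, v₆, v₇`, and each of `v₁, v₂, v₅` is adjacent to all of
`v₃, v₄, v₆, v₇`, because neither a deleted edge (`v₁v₂`, `v₃v₄`) nor a triangle edge joins the two
sides; the one missing pair is `v₈v₃`. -/

def IsMinorModel {W V : Type*} (H : SimpleGraph W) (G : SimpleGraph V) (ρ : W → Set V) :
    Prop :=
  (∀ w, (ρ w).Nonempty) ∧
    (∀ w, (G.induce (ρ w)).Connected) ∧
    (Pairwise fun w w' => Disjoint (ρ w) (ρ w')) ∧
    ∀ ⦃w w'⦄, H.Adj w w' → ∃ a ∈ ρ w, ∃ b ∈ ρ w', G.Adj a b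

theorem IsMinorModel.isMinor {W V : Type*} {H : SimpleGraph W} {G : SimpleGraph V}
    {ρ : W → Set V} (h : IsMinorModel H G ρ) : IsMinor H G :=
  ⟨ρ, h⟩

theorem SimpleGraph.Copy.isMinorModel_singleton {W V : Type*} {H : SimpleGraph W}
    {G : SimpleGraph V} (f : Copy H G) : IsMinorModel H G fun w => {f w} :=
  ⟨fun _ => Set.singleton_nonempty _,
    fun _ => Connected.of_subsingleton,
    fun _ _ hne => Set.disjoint_singleton.2 (f.injective.ne hne),
    fun _ _ hadj => ⟨_, rfl, _, rfl, f.toHom.map_adj hadj⟩⟩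

section deltaY

variable {V : Type*} {G : SimpleGraph V} {v₁ v₂ v₃ : V}

theorem deltaY_adj_inl_inl_of_notMem_triangle {a b : V} (ha : a ≠ v₁ ∧ a ≠ v₂ ∧ a ≠ v₃)
    (hab : G.Adj a b) : (deltaY G v₁ v₂ v₃).Adj (.inl a) (.inl b) := by
  refine ⟨hab, ?_⟩
  simp only [Set.mem_insert_iff, Set.mem_singleton_iff, Sym2.eq_iff]
  grind

theorem deltaY_adj_inr_inl {a : V} (ha : a = v₁ ∨ a = v₂ ∨ a = v₃) :
    (deltaY G v₁ v₂ v₃).Adj (.inr ()) (.inl a) :=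
  ha

end deltaY

theorem G₄_adj_iff {a b : Fin 7} :
    G₄.Adj a b ↔ a ≠ b ∧ s(a, b) ≠ s(0, 1) ∧ s(a, b) ≠ s(2, 3) := by
  simp [G₄]

theorem G₄'_adj_inl_inl {a b : Fin 7} (ha : a ∈ ({0, 1, 4} : Finset (Fin 7)))
    (hb : b ∈ ({2, 3, 5, 6} : Finset (Fin 7))) : G₄'.Adj (.inl a) (.inl b) := by
  refine deltaY_adj_inl_inl_of_notMem_triangle ?_ (G₄_adj_iff.2 ?_) <;>
    fin_cases ha <;> fin_cases hb <;> decide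

theorem G₄'_adj_inr_inl {b : Fin 7} (hb : b ∈ ({3, 5, 6} : Finset (Fin 7))) :
    G₄'.Adj (.inr ()) (.inl b) :=
  deltaY_adj_inr_inl (by simpa using hb)

def K44eToG₄' : Fin 4 ⊕ Fin 4 → Fin 7 ⊕ Unit :=
  Sum.elim ![.inr (), .inl 0, .inl 1, .inl 4] ![.inl 2, .inl 3, .inl 5, .inl 6]

theorem G₄'_adj_K44eToG₄' {i j : Fin 4} (hij : ¬(i = 0 ∧ j = 0)) :
    G₄'.Adj (K44eToG₄' (.inl i)) (K44eToG₄' (.inr j)) := by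
  fin_cases i <;> fin_cases j <;>
    first
    | exact (hij ⟨rfl, rfl⟩).elim
    | exact G₄'_adj_inr_inl (by decide)
    | exact G₄'_adj_inl_inl (by decide) (by decide)

def K44eCopyG₄' : Copy K44e G₄' where
  toHom :=
    { toFun := K44eToG₄'
      map_rel' := by
        rintro (i | i) (j | j) h
        exacts [h.elim, G₄'_adj_K44eToG₄' h, (G₄'_adj_K44eToG₄' h).symm, h.elim] }
  injective' := by decide

theorem ρ₄_eq : ρ₄ = fun w => {K44eCopyG₄' w} := by
  funext w
  rcases w with (i | i) <;> fin_cases i <;> rfl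

/-- `K₇` minus two nonadjacent edges, followed by a Δ-Y exchange on a
triangle having exactly one vertex incident to a deleted edge, contains `K_{4,4} - e`
as a minor, witnessed by the parts `{v₁, v₂, v₅, v₈}` and `{v₃, v₄, v₆, v₇}`. -/
theorem K7_minus_nonadjacent_deltaY_has_K44e_minor :
    ((∀ w, (ρ₄ w).Nonempty) ∧
      (∀ w, (G₄'.induce (ρ₄ w)).Connected) ∧
      (Pairwise fun w w' => Disjoint (ρ₄ w) (ρ₄ w')) ∧
      ∀ ⦃w w'⦄, K44e.Adj w w' → ∃ a ∈ ρ₄ w, ∃ b ∈ ρ₄ w', G₄'.Adj a b) ∧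
    IsMinor K44e G₄' := by
  have hmodel : IsMinorModel K44e G₄' ρ₄ := ρ₄_eq ▸ K44eCopyG₄'.isMinorModel_singleton
  exact ⟨hmodel, hmodel.isMinor⟩
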